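/- Forward shift: p_n^{(α,β)}(x,y) - p_n^{(α,β)}(qx,y) = -(q^{1-n}(1-q^n)(1-αβq^{n+1})/(1-αq)) · x · p_{n-1}^{(qα,qβ)}(x,y) for n ≥ 1. -/

import Mathlib

open Finset

/-- q-shifted factorial (a;q)_n -/
noncomputable def qPoch (a q : ℝ) (n : ℕ) : ℝ := ∏ j ∈ Finset.range n, (1 - a * q ^ j)

/-- infinite q-shifted factorial (a;q)_∞ -/
noncomputable def qPochInf (a q : ℝ) : ℝ := ∏' j : ℕ, (1 - a * q ^ j)

/-- q-binomial coefficient [n choose k]_q -/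
noncomputable def qBinom (q : ℝ) (n k : ℕ) : ℝ :=
  qPoch q q n / (qPoch q q k * qPoch q q (n - k))

/-- q-derivative -/
noncomputable def Dq (q : ℝ) (f : ℝ → ℝ) (x : ℝ) : ℝ := (f x - f (q * x)) / x

/-- bivariate q-Laguerre polynomial L_n^{(α)}(x,y) -/
noncomputable def qLaguerre (q α : ℝ) (n : ℕ) (x y : ℝ) : ℝ :=
  ∑ k ∈ Finset.range (n + 1),
    (-1 : ℝ) ^ k * qBinom q n k * (q ^ ((k : ℝ) ^ 2 + (k : ℝ) * α)) /
      qPoch (q ^ (α + 1)) q k * x ^ k * y ^ (n - k)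

/-- bivariate little q-Jacobi polynomial p_n^{(α,β)}(x,y) -/
noncomputable def littleQJacobi (q a b : ℝ) (n : ℕ) (x y : ℝ) : ℝ :=
  ∑ k ∈ Finset.range (n + 1),
    (-1 : ℝ) ^ k * (q ^ (((k : ℝ) * ((k : ℝ) + 1 - 2 * (n : ℝ))) / 2)) * qBinom q n k *
      (qPoch (a * b * q ^ (n + 1)) q k / qPoch (a * q) q k) * x ^ k * y ^ (n - k)

/-! Replacing `x` by `q * x` multiplies the `k`-th monomial by `q ^ k`, so the difference has
coefficients `c_k (1 - q ^ k)` and its `k = 0` term vanishes. After the shift `k = j + 1` each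
coefficient factors as a constant times the `j`-th coefficient of `p_{n-1}^{(qα,qβ)}`, by
`[n, j+1]_q (1 - q^(j+1)) = (1 - q^n) [n-1, j]_q`, `(c;q)_(j+1) = (1 - c) (cq;q)_j`, and the
quadratic exponent of `q` dropping by `n - 1`. -/

lemma qPoch_succ_eq_one_sub_mul (c q : ℝ) (j : ℕ) :
    qPoch c q (j + 1) = (1 - c) * qPoch (c * q) q j := by
  simp only [qPoch, Finset.prod_range_succ', pow_zero, mul_one]
  rw [mul_comm]
  congr 1
  exact Finset.prod_congr rfl fun i _ => by ring

lemma qPoch_succ (c q : ℝ) (j : ℕ) : qPoch c q (j + 1) = qPoch c q j * (1 - c * q ^ j) :=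
  Finset.prod_range_succ _ _

lemma qBinom_succ_succ_mul (q : ℝ) (m j : ℕ) (hq : q ^ (j + 1) ≠ 1) :
    qBinom q (m + 1) (j + 1) * (1 - q ^ (j + 1)) = (1 - q ^ (m + 1)) * qBinom q m j := by
  have hne : 1 - q ^ (j + 1) ≠ 0 := sub_ne_zero.mpr hq.symm
  rw [qBinom, qBinom, qPoch_succ, qPoch_succ, Nat.add_sub_add_right]
  simp only [← pow_succ']
  rw [show qPoch q q j * (1 - q ^ (j + 1)) * qPoch q q (m - j)
      = qPoch q q j * qPoch q q (m - j) * (1 - q ^ (j + 1)) by ring, ← div_div,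
    div_mul_cancel₀ _ hne]
  ring

noncomputable def littleQJacobiCoeff (q a b : ℝ) (n k : ℕ) : ℝ :=
  (-1 : ℝ) ^ k * (q ^ (((k : ℝ) * ((k : ℝ) + 1 - 2 * (n : ℝ))) / 2)) * qBinom q n k *
    (qPoch (a * b * q ^ (n + 1)) q k / qPoch (a * q) q k)

lemma littleQJacobi_sub_dilate (q a b : ℝ) (n : ℕ) (x y : ℝ) :
    littleQJacobi q a b n x y - littleQJacobi q a b n (q * x) y
      = ∑ k ∈ Finset.range (n + 1),
          littleQJacobiCoeff q a b n k * (1 - q ^ k) * x ^ k * y ^ (n - k) := by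
  rw [littleQJacobi, littleQJacobi, ← Finset.sum_sub_distrib]
  refine Finset.sum_congr rfl fun k _ => ?_
  rw [littleQJacobiCoeff, mul_pow]
  ring

lemma rpow_quadraticExponent_succ {q : ℝ} (hq : 0 < q) (m j : ℕ) :
    q ^ (((j + 1 : ℕ) : ℝ) * (((j + 1 : ℕ) : ℝ) + 1 - 2 * ((m + 1 : ℕ) : ℝ)) / 2)
      = q / q ^ (m + 1) * q ^ ((j : ℝ) * ((j : ℝ) + 1 - 2 * (m : ℝ)) / 2) := by
  have hscale : q / q ^ (m + 1) = q ^ (-(m : ℝ)) := by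
    rw [Real.rpow_neg hq.le, Real.rpow_natCast, pow_succ', div_mul_cancel_left₀ hq.ne']
  rw [hscale, ← Real.rpow_add hq]
  congr 1
  push_cast
  ring

lemma littleQJacobiCoeff_succ_mul {q : ℝ} (hq : 0 < q) (a b : ℝ) (m j : ℕ)
    (hqj : q ^ (j + 1) ≠ 1) :
    littleQJacobiCoeff q a b (m + 1) (j + 1) * (1 - q ^ (j + 1))
      = -(q / q ^ (m + 1) * (1 - q ^ (m + 1)) * (1 - a * b * q ^ (m + 1 + 1)) / (1 - a * q))
          * littleQJacobiCoeff q (q * a) (q * b) m j := by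
  rw [littleQJacobiCoeff, littleQJacobiCoeff, rpow_quadraticExponent_succ hq,
    qPoch_succ_eq_one_sub_mul, qPoch_succ_eq_one_sub_mul, mul_div_mul_comm,
    mul_right_comm _ _ (1 - q ^ (j + 1)),
    mul_assoc _ (qBinom q (m + 1) (j + 1)), qBinom_succ_succ_mul q m j hqj,
    show a * b * q ^ (m + 1 + 1) * q = q * a * (q * b) * q ^ (m + 1) by ring,
    show a * q * q = q * a * q by ring]
  ring

theorem littleQJacobi_forwardShift_general (q a b : ℝ) (hq : 0 < q) (hq1 : q < 1)
    (n : ℕ) (hn : 1 ≤ n) (x y : ℝ) :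
    littleQJacobi q a b n x y - littleQJacobi q a b n (q * x) y
      = -(q / q ^ n * (1 - q ^ n) * (1 - a * b * q ^ (n + 1)) / (1 - a * q)) * x *
          littleQJacobi q (q * a) (q * b) (n - 1) x y := by
  obtain ⟨m, rfl⟩ : ∃ m, n = m + 1 := ⟨n - 1, by omega⟩
  rw [littleQJacobi_sub_dilate, Finset.sum_range_succ', littleQJacobi, Finset.mul_sum,
    Nat.add_sub_cancel]
  simp only [pow_zero, sub_self, mul_zero, zero_mul, add_zero]
  refine Finset.sum_congr rfl fun j _ => ?_
  rw [littleQJacobiCoeff_succ_mul hq a b m j (pow_lt_one₀ hq.le hq1 j.succ_ne_zero).ne,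
    Nat.add_sub_add_right, littleQJacobiCoeff]
  ring

theorem littleQJacobi_forwardShift (q a b : ℝ) (hq : 0 < q) (hq1 : q < 1)
    (ha : a ≠ q⁻¹) (n : ℕ) (hn : 1 ≤ n) (x y : ℝ) :
    littleQJacobi q a b n x y - littleQJacobi q a b n (q * x) y
      = -(q / q ^ n * (1 - q ^ n) * (1 - a * b * q ^ (n + 1)) / (1 - a * q)) * x *
          littleQJacobi q (q * a) (q * b) (n - 1) x y :=
  littleQJacobi_forwardShift_general q a b hq hq1 n hn x y
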